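/- Let H = (M, n, R) be a constant-rate multi-mode system, S ⊆ ℝⁿ an open set, and x_s, x_t ∈ S. There exists a finite S-safe schedule steering H from x_s to x_t if and only if there exists, for some N ≥ 1, a witness channel ⟨c_1, c_2, …, c_N⟩ in S for (H, x_s, x_t). -/

import Mathlib

/-- The terminal state of the run of a schedule (a list of timed actions) from a state. -/
def runEnd {M V : Type*} [AddCommGroup V] [Module ℝ V] (R : M → V) : V → List (M × ℝ) → V
  | x, [] => x
  | x, (m, t) :: σ => runEnd R (x + t • R m) σ

/-- A schedule is `S`-safe from `x` if every point visited during its run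
(including along each timed action) lies in `S`. -/
def SafeSched {M V : Type*} [AddCommGroup V] [Module ℝ V] (R : M → V) (S : Set V) :
    V → List (M × ℝ) → Prop
  | _, [] => True
  | x, (m, t) :: σ =>
      (∀ τ ∈ Set.Icc (0 : ℝ) t, x + τ • R m ∈ S) ∧ SafeSched R S (x + t • R m) σ

/-- A cell of `S` is an open, convex subset of `S`. -/
def IsCell {n : ℕ} (S c : Set (Fin n → ℝ)) : Prop :=
  IsOpen c ∧ Convex ℝ c ∧ c ⊆ S

/-- `c 1, …, c N` is a channel in `S`: a finite sequence of cells of `S` in which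
consecutive cells intersect. -/
def IsChannel {n : ℕ} (S : Set (Fin n → ℝ)) (N : ℕ) (c : ℕ → Set (Fin n → ℝ)) : Prop :=
  1 ≤ N ∧ (∀ i, 1 ≤ i → i ≤ N → IsCell S (c i)) ∧
    ∀ i, 1 ≤ i → i < N → (c i ∩ c (i + 1)).Nonempty

/-- The channel `c 1, …, c N` is a witness to reachability for `(H, x_s, x_t)`:
there are points `x_0 = x_s ∈ c 1`, `x_N = x_t ∈ c N`, `x_i ∈ c i ∩ c (i+1)` for
`1 ≤ i < N`, and nonnegative dwell times such that each `x_i` is reached from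
`x_{i-1}` by a nonnegative combination of the rate vectors. -/
def IsWitness {M : Type*} [Fintype M] {n : ℕ} (R : M → (Fin n → ℝ))
    (xs xt : Fin n → ℝ) (N : ℕ) (c : ℕ → Set (Fin n → ℝ)) : Prop :=
  ∃ x : ℕ → (Fin n → ℝ),
    x 0 = xs ∧ x N = xt ∧ x 0 ∈ c 1 ∧ x N ∈ c N ∧
    (∀ i, 1 ≤ i → i < N → x i ∈ c i ∩ c (i + 1)) ∧
    ∃ t : ℕ → M → ℝ, (∀ i m, 0 ≤ t i m) ∧
      ∀ i, 1 ≤ i → i ≤ N → x i = x (i - 1) + ∑ m, t i m • R m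

/-!
A safe schedule yields a channel: each timed action traces a segment inside the open set `S`,
and a small open thickening of that segment is a cell. Conversely, inside one cell a displacement
`∑ t m • R m` is realised by cycling `K` times through all modes with dwell times `t m / K`; every
cycle stays within `(∑ t m * ‖R m‖) / K` of the straight segment, and for large `K` this lies in a
thickening of the segment contained in the (open, convex) cell.
-/

section Schedule

variable {M V : Type*} [AddCommGroup V] [Module ℝ V] (R : M → V)

lemma runEnd_append (σ τ : List (M × ℝ)) (x : V) :
    runEnd R x (σ ++ τ) = runEnd R (runEnd R x σ) τ := by
  induction σ generalizing x with
  | nil => rfl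
  | cons p σ ih => exact ih _

lemma safeSched_append {S : Set V} (σ τ : List (M × ℝ)) (x : V) :
    SafeSched R S x (σ ++ τ) ↔ SafeSched R S x σ ∧ SafeSched R S (runEnd R x σ) τ := by
  induction σ generalizing x with
  | nil => simp [SafeSched, runEnd]
  | cons p σ ih => simp [SafeSched, runEnd, ih, and_assoc]

lemma SafeSched.mono {S S' : Set V} (h : S ⊆ S') {σ : List (M × ℝ)} {x : V}
    (hσ : SafeSched R S x σ) : SafeSched R S' x σ := by
  induction σ generalizing x with
  | nil => trivial
  | cons p σ ih => exact ⟨fun τ hτ => h (hσ.1 τ hτ), ih hσ.2⟩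

lemma runEnd_eq_add_sum (σ : List (M × ℝ)) (x : V) :
    runEnd R x σ = x + (σ.map fun p => p.2 • R p.1).sum := by
  induction σ generalizing x with
  | nil => simp [runEnd]
  | cons p σ ih => simp only [runEnd, ih, List.map_cons, List.sum_cons]; abel

lemma runEnd_flatten_replicate {ρ : List (M × ℝ)} {u : V} (hρ : ∀ y, runEnd R y ρ = y + u)
    (k : ℕ) (x : V) : runEnd R x (List.replicate k ρ).flatten = x + k • u := by
  induction k generalizing x with
  | zero => simp [runEnd]
  | succ k ih =>
    rw [List.replicate_succ, List.flatten_cons, runEnd_append, hρ, ih, succ_nsmul', add_assoc]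

lemma safeSched_flatten_replicate {S : Set V} {ρ : List (M × ℝ)} {u : V}
    (hρ : ∀ y, runEnd R y ρ = y + u) {k : ℕ} {x : V}
    (hsafe : ∀ j < k, SafeSched R S (x + j • u) ρ) :
    SafeSched R S x (List.replicate k ρ).flatten := by
  induction k generalizing x with
  | zero => trivial
  | succ k ih =>
    rw [List.replicate_succ, List.flatten_cons, safeSched_append, hρ]
    refine ⟨by simpa using hsafe 0 k.succ_pos, ih fun j hj => ?_⟩
    simpa [add_assoc, succ_nsmul'] using hsafe (j + 1) (by omega)

end Schedule

section Normed

lemma isCompact_segment {E : Type*} [AddCommGroup E] [Module ℝ E] [TopologicalSpace E]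
    [IsTopologicalAddGroup E] [ContinuousSMul ℝ E] (a b : E) : IsCompact (segment ℝ a b) :=
  convexHull_pair (𝕜 := ℝ) a b ▸ (Set.toFinite _).isCompact_convexHull (𝕜 := ℝ)

lemma segment_add_smul_subset {E : Type*} [AddCommGroup E] [Module ℝ E] {S : Set E} {x v : E}
    {t : ℝ} (ht : 0 ≤ t) (h : ∀ τ ∈ Set.Icc 0 t, x + τ • v ∈ S) :
    segment ℝ x (x + t • v) ⊆ S := by
  rw [segment_eq_image']
  rintro _ ⟨θ, hθ, rfl⟩
  simp only [add_sub_cancel_left, smul_smul]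
  exact h _ ⟨mul_nonneg hθ.1 ht, mul_le_of_le_one_left ht hθ.2⟩

variable {M V : Type*} [NormedAddCommGroup V] [NormedSpace ℝ V] (R : M → V)

lemma safeSched_of_closedBall_subset {S : Set V} (σ : List (M × ℝ)) (x : V)
    (hσ : ∀ p ∈ σ, 0 ≤ p.2) (hS : Metric.closedBall x (σ.map fun p => p.2 * ‖R p.1‖).sum ⊆ S) :
    SafeSched R S x σ := by
  induction σ generalizing x with
  | nil => trivial
  | cons p σ ih =>
    obtain ⟨m, t⟩ := p
    have ht : 0 ≤ t := hσ _ List.mem_cons_self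
    have hrest : 0 ≤ (σ.map fun p => p.2 * ‖R p.1‖).sum :=
      List.sum_nonneg fun a ha => by
        obtain ⟨q, hq, rfl⟩ := List.mem_map.1 ha
        exact mul_nonneg (hσ q (List.mem_cons_of_mem _ hq)) (norm_nonneg _)
    simp only [List.map_cons, List.sum_cons] at hS
    refine ⟨fun τ hτ => hS ?_, ih _ (fun q hq => hσ q (List.mem_cons_of_mem _ hq))
      ((Metric.closedBall_subset_closedBall' ?_).trans hS)⟩
    · rw [Metric.mem_closedBall, dist_eq_norm, add_sub_cancel_left, norm_smul,
        Real.norm_of_nonneg hτ.1]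
      nlinarith [norm_nonneg (R m), hτ.2]
    · rw [dist_eq_norm, add_sub_cancel_left, norm_smul, Real.norm_of_nonneg ht]
      linarith

variable [Fintype M]

theorem exists_safeSched_of_isOpen_of_convex {c : Set V} (hco : IsOpen c) (hcc : Convex ℝ c)
    {a b : V} (ha : a ∈ c) (hb : b ∈ c) (t : M → ℝ) (ht : ∀ m, 0 ≤ t m)
    (hab : b = a + ∑ m, t m • R m) :
    ∃ σ : List (M × ℝ), (∀ p ∈ σ, 0 ≤ p.2) ∧ SafeSched R c a σ ∧ runEnd R a σ = b := by
  obtain ⟨δ, hδ, hthick⟩ :=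
    (isCompact_segment a b).exists_thickening_subset_open hco (hcc.segment_subset ha hb)
  set C := ∑ m, t m * ‖R m‖
  have hC : 0 ≤ C := Finset.sum_nonneg fun m _ => mul_nonneg (ht m) (norm_nonneg _)
  obtain ⟨K, hK⟩ := exists_nat_gt (C / δ)
  have hKpos : (0 : ℝ) < K := (div_nonneg hC hδ.le).trans_lt hK
  have hCK : C / K < δ := (div_lt_iff₀ hKpos).2 (by rwa [div_lt_iff₀ hδ, mul_comm] at hK)
  set ρ : List (M × ℝ) := Finset.univ.toList.map fun m => (m, t m / K)
  set u : V := (K : ℝ)⁻¹ • (b - a)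
  have hρ : ∀ y, runEnd R y ρ = y + u := fun y => by
    simp only [runEnd_eq_add_sum, ρ, u, List.map_map, Function.comp_def, Finset.sum_map_toList,
      hab, add_sub_cancel_left, Finset.smul_sum, smul_smul, div_eq_inv_mul]
  have hρnn : ∀ p ∈ ρ, 0 ≤ p.2 := fun p hp => by
    obtain ⟨m, -, rfl⟩ := List.mem_map.1 hp
    exact div_nonneg (ht m) hKpos.le
  have hρsafe : ∀ y ∈ segment ℝ a b, SafeSched R c y ρ := fun y hy => by
    have hbudget : (ρ.map fun p => p.2 * ‖R p.1‖).sum = C / K := by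
      simp only [ρ, List.map_map, Function.comp_def, Finset.sum_map_toList, C, Finset.sum_div,
        div_mul_eq_mul_div]
    refine safeSched_of_closedBall_subset R ρ y hρnn ?_
    rw [hbudget]
    exact (Metric.closedBall_subset_ball hCK).trans
      ((Metric.ball_subset_thickening hy δ).trans hthick)
  refine ⟨(List.replicate K ρ).flatten, ?_,
    safeSched_flatten_replicate R hρ fun j hj => hρsafe _ ?_, ?_⟩
  · simp only [List.mem_flatten, List.mem_replicate]
    rintro p ⟨_, ⟨-, rfl⟩, hp⟩
    exact hρnn p hp
  · rw [segment_eq_image']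
    refine ⟨j / K, ⟨by positivity, (div_le_one hKpos).2 (by exact_mod_cast hj.le)⟩, ?_⟩
    simp only [u, ← Nat.cast_smul_eq_nsmul ℝ, smul_smul, div_eq_mul_inv]
  · rw [runEnd_flatten_replicate R hρ, ← Nat.cast_smul_eq_nsmul ℝ, smul_smul,
      mul_inv_cancel₀ hKpos.ne', one_smul, add_sub_cancel]

end Normed

section Channel

variable {n : ℕ} {S : Set (Fin n → ℝ)}

lemma exists_isCell_superset_segment (hS : IsOpen S) {a b : Fin n → ℝ}
    (h : segment ℝ a b ⊆ S) : ∃ c, IsCell S c ∧ segment ℝ a b ⊆ c := by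
  obtain ⟨δ, hδ, hthick⟩ := (isCompact_segment a b).exists_thickening_subset_open hS h
  exact ⟨_, ⟨Metric.isOpen_thickening, (convex_segment a b).thickening δ, hthick⟩,
    Metric.self_subset_thickening hδ _⟩

lemma isChannel_one {c : Set (Fin n → ℝ)} (hc : IsCell S c) : IsChannel S 1 fun _ => c :=
  ⟨le_rfl, fun _ _ _ => hc, fun _ _ _ => by omega⟩

lemma IsChannel.snoc {N : ℕ} {c : ℕ → Set (Fin n → ℝ)} {c' : Set (Fin n → ℝ)}
    (hch : IsChannel S N c) (hc' : IsCell S c') (hne : (c N ∩ c').Nonempty) :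
    IsChannel S (N + 1) (Function.update c (N + 1) c') := by
  obtain ⟨hN, hcell, hinter⟩ := hch
  refine ⟨by omega, fun i h1 h2 => ?_, fun i h1 h2 => ?_⟩
  · rcases h2.eq_or_lt with rfl | h2
    · simpa using hc'
    · rw [Function.update_of_ne h2.ne]
      exact hcell i h1 (by omega)
  · rcases (Nat.lt_succ_iff.1 h2).eq_or_lt with rfl | h2
    · simpa [Function.update_apply, hN] using hne
    · rw [Function.update_of_ne (by omega), Function.update_of_ne (by omega)]
      exact hinter i h1 h2

variable {M : Type*} [Fintype M] (R : M → (Fin n → ℝ))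

lemma isWitness_one {c : Set (Fin n → ℝ)} {x : Fin n → ℝ} (hx : x ∈ c) :
    IsWitness R x x 1 fun _ => c :=
  ⟨fun _ => x, rfl, rfl, hx, hx, fun _ _ _ => by omega, fun _ _ => 0, fun _ _ => le_rfl,
    fun _ _ _ => by simp⟩

lemma IsWitness.mem_last {xs xt : Fin n → ℝ} {N : ℕ} {c : ℕ → Set (Fin n → ℝ)}
    (hw : IsWitness R xs xt N c) : xt ∈ c N := by
  obtain ⟨x, -, rfl, -, hxN, -⟩ := hw
  exact hxN

lemma IsWitness.snoc {xs y z : Fin n → ℝ} {N : ℕ} {c : ℕ → Set (Fin n → ℝ)}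
    {c' : Set (Fin n → ℝ)} (hw : IsWitness R xs y N c) (hy : y ∈ c') (hz : z ∈ c') (t : M → ℝ)
    (ht : 0 ≤ t) (hyz : z = y + ∑ m, t m • R m) :
    IsWitness R xs z (N + 1) (Function.update c (N + 1) c') := by
  obtain ⟨x, hx0, hxN, hx0c, hxNc, hmid, s, hs, hstep⟩ := hw
  refine ⟨Function.update x (N + 1) z, by simpa using hx0, by simp, ?_, by simpa using hz,
    fun i h1 h2 => ?_, Function.update s (N + 1) t, fun i m => ?_, fun i h1 h2 => ?_⟩
  · rcases N.eq_zero_or_pos with rfl | hN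
    · simpa [← hxN] using hy
    · simpa [Function.update_apply, hN.ne'] using hx0c
  · have hi : i ≠ N + 1 := by omega
    rw [Function.update_of_ne hi, Function.update_of_ne hi]
    rcases (Nat.lt_succ_iff.1 h2).eq_or_lt with rfl | h2
    · rw [Function.update_self]
      exact ⟨hxNc, hxN ▸ hy⟩
    · rw [Function.update_of_ne (by omega)]
      exact hmid i h1 h2
  · rw [Function.update_apply]
    split_ifs
    exacts [ht m, hs i m]
  · rw [Function.update_of_ne (by omega : i - 1 ≠ N + 1)]
    rcases h2.eq_or_lt with rfl | h2
    · simpa [hxN] using hyz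
    · rw [Function.update_of_ne h2.ne, Function.update_of_ne h2.ne]
      exact hstep i h1 (by omega)

theorem exists_channel_witness_of_safeSched (hS : IsOpen S) {x : Fin n → ℝ} (hx : x ∈ S)
    (σ : List (M × ℝ)) (hσ : ∀ p ∈ σ, 0 ≤ p.2) (hsafe : SafeSched R S x σ) :
    ∃ N c, IsChannel S N c ∧ IsWitness R x (runEnd R x σ) N c := by
  induction σ using List.reverseRecOn with
  | nil =>
    obtain ⟨c, hc, hxc⟩ := exists_isCell_superset_segment hS (a := x) (b := x) (by simpa)
    exact ⟨1, _, isChannel_one hc, isWitness_one R (hxc (left_mem_segment ℝ x x))⟩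
  | append_singleton σ p ih =>
    classical
    obtain ⟨m, t⟩ := p
    have ht : 0 ≤ t := hσ _ (List.mem_append_right _ (List.mem_singleton_self _))
    rw [safeSched_append] at hsafe
    obtain ⟨N, c, hch, hw⟩ := ih (fun q hq => hσ q (List.mem_append_left _ hq)) hsafe.1
    set y := runEnd R x σ
    obtain ⟨c', hc', hyc'⟩ :=
      exists_isCell_superset_segment hS (segment_add_smul_subset ht hsafe.2.1)
    have hy : y ∈ c' := hyc' (left_mem_segment ℝ _ _)
    refine ⟨N + 1, _, hch.snoc hc' ⟨y, hw.mem_last, hy⟩, ?_⟩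
    rw [runEnd_append]
    exact hw.snoc R hy (hyc' (right_mem_segment ℝ _ _)) (Pi.single m t)
      (Pi.single_nonneg.2 ht) (by simp [Pi.single_apply, ite_smul, runEnd, y])

theorem exists_safeSched_of_witness {N : ℕ} {c : ℕ → Set (Fin n → ℝ)} {xs xt : Fin n → ℝ}
    (hch : IsChannel S N c) (hw : IsWitness R xs xt N c) :
    ∃ σ : List (M × ℝ), (∀ p ∈ σ, 0 ≤ p.2) ∧ SafeSched R S xs σ ∧ runEnd R xs σ = xt := by
  obtain ⟨x, rfl, rfl, hx0, hxN, hmid, t, ht, hstep⟩ := hw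
  suffices ∀ k ≤ N, ∃ σ : List (M × ℝ),
      (∀ p ∈ σ, 0 ≤ p.2) ∧ SafeSched R S (x 0) σ ∧ runEnd R (x 0) σ = x k from this N le_rfl
  intro k hk
  induction k with
  | zero => exact ⟨[], by simp, trivial, rfl⟩
  | succ k ih =>
    obtain ⟨σ, hσ, hsafe, hend⟩ := ih (by omega)
    have hcell := hch.2.1 (k + 1) (by omega) hk
    have hxk : x k ∈ c (k + 1) := by
      rcases k with _ | k
      exacts [hx0, (hmid (k + 1) (by omega) (by omega)).2]
    have hxk' : x (k + 1) ∈ c (k + 1) := by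
      rcases hk.eq_or_lt with rfl | hlt
      exacts [hxN, (hmid _ (by omega) hlt).1]
    obtain ⟨τ, hτ, hτsafe, hτend⟩ := exists_safeSched_of_isOpen_of_convex R hcell.1 hcell.2.1
      hxk hxk' (t (k + 1)) (ht _) (hstep (k + 1) (by omega) hk)
    refine ⟨σ ++ τ, fun p hp => ?_, (safeSched_append R σ τ _).2 ⟨hsafe, ?_⟩, ?_⟩
    · rcases List.mem_append.1 hp with hp | hp
      exacts [hσ p hp, hτ p hp]
    · rw [hend]
      exact hτsafe.mono R hcell.2.2
    · rw [runEnd_append, hend, hτend]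

end Channel

theorem stmt3_general {M : Type*} [Fintype M] {n : ℕ}
    (R : M → (Fin n → ℝ)) (S : Set (Fin n → ℝ)) (hSopen : IsOpen S)
    (xs xt : Fin n → ℝ) (hxs : xs ∈ S) :
    (∃ σ : List (M × ℝ), (∀ p ∈ σ, 0 ≤ p.2) ∧ SafeSched R S xs σ ∧ runEnd R xs σ = xt) ↔
      (∃ (N : ℕ) (c : ℕ → Set (Fin n → ℝ)), IsChannel S N c ∧ IsWitness R xs xt N c) := by
  constructor
  · rintro ⟨σ, hσ, hsafe, rfl⟩
    exact exists_channel_witness_of_safeSched R hSopen hxs σ hσ hsafe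
  · rintro ⟨N, c, hch, hw⟩
    exact exists_safeSched_of_witness R hch hw

/-- For an open safety set `S`, there is a finite `S`-safe schedule steering the
multi-mode system from `x_s` to `x_t` iff `S` contains a witness channel for
`(H, x_s, x_t)`. -/
theorem stmt3 {M : Type*} [Fintype M] [Nonempty M] {n : ℕ} (hn : 0 < n)
    (R : M → (Fin n → ℝ)) (S : Set (Fin n → ℝ)) (hSopen : IsOpen S)
    (xs xt : Fin n → ℝ) (hxs : xs ∈ S) (hxt : xt ∈ S) :
    (∃ σ : List (M × ℝ), (∀ p ∈ σ, 0 ≤ p.2) ∧ SafeSched R S xs σ ∧ runEnd R xs σ = xt) ↔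
      (∃ (N : ℕ) (c : ℕ → Set (Fin n → ℝ)), IsChannel S N c ∧ IsWitness R xs xt N c) :=
  stmt3_general R S hSopen xs xt hxs
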